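/- arXiv:2403.19672 — 5 statements merged into one kernel-verified Lean document; each statement's English description precedes it below -/
import Mathlib

section
/- Let G, K, L be abelian groups with distinguished nonzero elements g ∈ G, k ∈ K, l ∈ L, let f : G → K and h : G → L be group homomorphisms with f(g) = k and h(g) = l. Then the following are equivalent: (1) there exist an abelian group D with a nonzero distinguished element d, and group homomorphisms f' : K → D, h' : L → D with f'(k) = d = h'(l) and f' ∘ f = h' ∘ h; (2) l ∉ h(ker f) and k ∉ f(ker h). -/
theorem AddMonoidHom.notMem_map_ker_of_comp_eq {G K L D : Type*} [AddGroup G] [AddGroup K]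
    [AddGroup L] [AddGroup D] {f : G →+ K} {h : G →+ L} {f' : K →+ D} {h' : L →+ D}
    (hcomm : f'.comp f = h'.comp h) {l : L} (hl : h' l ≠ 0) : l ∉ f.ker.map h := by
  rintro ⟨a, ha, rfl⟩
  apply hl
  rw [← AddMonoidHom.comp_apply, ← hcomm, AddMonoidHom.comp_apply, AddMonoidHom.mem_ker.mp ha,
    map_zero]

section Pushout

variable {G K L : Type*} [AddCommGroup G] [AddCommGroup K] [AddCommGroup L]

abbrev AddMonoidHom.Pushout (f : G →+ K) (h : G →+ L) : Type _ :=
  (K × L) ⧸ (f.prod (-h)).range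

variable (f : G →+ K) (h : G →+ L)

def AddMonoidHom.pushoutInl : K →+ f.Pushout h :=
  (QuotientAddGroup.mk' _).comp (AddMonoidHom.inl K L)

def AddMonoidHom.pushoutInr : L →+ f.Pushout h :=
  (QuotientAddGroup.mk' _).comp (AddMonoidHom.inr K L)

theorem AddMonoidHom.pushoutInl_comp_eq :
    (f.pushoutInl h).comp f = (f.pushoutInr h).comp h := by
  ext a
  simp only [pushoutInl, pushoutInr, comp_apply, inl_apply, inr_apply,
    QuotientAddGroup.mk'_apply, QuotientAddGroup.eq]
  exact ⟨-a, by simp⟩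

theorem AddMonoidHom.pushoutInl_eq_zero_iff (k : K) :
    f.pushoutInl h k = 0 ↔ k ∈ h.ker.map f := by
  simp only [pushoutInl, comp_apply, inl_apply, QuotientAddGroup.mk'_apply,
    QuotientAddGroup.eq_zero_iff, mem_range, prod_apply, neg_apply, Prod.mk.injEq, neg_eq_zero,
    AddSubgroup.mem_map, mem_ker]
  exact ⟨fun ⟨a, hfa, hha⟩ => ⟨a, hha, hfa⟩, fun ⟨a, hha, hfa⟩ => ⟨a, hfa, hha⟩⟩

end Pushout

theorem stmt0_general {G K L : Type} [AddCommGroup G] [AddCommGroup K] [AddCommGroup L]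
    (g : G) (k : K) (l : L)
    (f : G →+ K) (h : G →+ L) (hfg : f g = k) (hhg : h g = l) :
    (∃ (D : Type) (_ : AddCommGroup D) (d : D) (f' : K →+ D) (h' : L →+ D),
        d ≠ 0 ∧ f' k = d ∧ h' l = d ∧ f'.comp f = h'.comp h) ↔
    (l ∉ f.ker.map h ∧ k ∉ h.ker.map f) := by
  constructor
  · rintro ⟨D, _, d, f', h', hd, rfl, hh'l, hcomm⟩
    exact ⟨AddMonoidHom.notMem_map_ker_of_comp_eq hcomm (hh'l ▸ hd),
      AddMonoidHom.notMem_map_ker_of_comp_eq hcomm.symm hd⟩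
  · rintro ⟨-, hk⟩
    have hcomm := f.pushoutInl_comp_eq h
    refine ⟨f.Pushout h, inferInstance, f.pushoutInl h k, f.pushoutInl h, f.pushoutInr h,
      (f.pushoutInl_eq_zero_iff h k).not.mpr hk, rfl, ?_, hcomm⟩
    rw [← hfg, ← hhg, ← AddMonoidHom.comp_apply, ← hcomm, AddMonoidHom.comp_apply]

theorem stmt0 {G K L : Type} [AddCommGroup G] [AddCommGroup K] [AddCommGroup L]
    (g : G) (k : K) (l : L) (hg : g ≠ 0) (hk : k ≠ 0) (hl : l ≠ 0)
    (f : G →+ K) (h : G →+ L) (hfg : f g = k) (hhg : h g = l) :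
    (∃ (D : Type) (_ : AddCommGroup D) (d : D) (f' : K →+ D) (h' : L →+ D),
        d ≠ 0 ∧ f' k = d ∧ h' l = d ∧ f'.comp f = h'.comp h) ↔
    (l ∉ f.ker.map h ∧ k ∉ h.ker.map f) :=
  stmt0_general g k l f h hfg hhg
end

section
/- Let G be an abelian group and g ∈ G a nonzero element. Suppose that for all subgroups H, K of G with g ∉ H and g ∉ K, one has g ∉ H + K. Then for every pair of group homomorphisms f : G → K₀ and h : G → L₀ into abelian groups with f(g) ≠ 0 and h(g) ≠ 0, there exist an abelian group D, an element d ∈ D with d ≠ 0, and homomorphisms f' : K₀ → D, h' : L₀ → D such that f'(f(g)) = d = h'(h(g)) and f' ∘ f = h' ∘ h. -/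
/-!
The pushout `D = (K₀ × L₀) ⧸ {(f x, -h x)}` of `f` and `h` works, with `d` the image of `f g`.
If `d = 0` then `f g = f x` and `h x = 0` for some `x`, so `g = (g - x) + x ∈ ker f ⊔ ker h`,
although `g` lies in neither kernel.
-/

namespace AddMonoidHom

variable {G A B : Type*} [AddCommGroup G] [AddCommGroup A] [AddCommGroup B]

abbrev Pushout_s2 (f : G →+ A) (h : G →+ B) : Type _ := (A × B) ⧸ (f.prod (-h)).range

def pushoutInl_s2 (f : G →+ A) (h : G →+ B) : A →+ Pushout_s2 f h :=
  (QuotientAddGroup.mk' _).comp (inl A B)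

def pushoutInr_s2 (f : G →+ A) (h : G →+ B) : B →+ Pushout_s2 f h :=
  (QuotientAddGroup.mk' _).comp (inr A B)

theorem pushoutInl_comp_eq_s2 (f : G →+ A) (h : G →+ B) :
    (pushoutInl_s2 f h).comp f = (pushoutInr_s2 f h).comp h := by
  ext x
  simp only [pushoutInl_s2, pushoutInr_s2, comp_apply, QuotientAddGroup.mk'_apply, QuotientAddGroup.eq]
  exact ⟨-x, by simp⟩

theorem pushoutInl_eq_zero_iff_s2 (f : G →+ A) (h : G →+ B) {a : A} :
    pushoutInl_s2 f h a = 0 ↔ ∃ x, f x = a ∧ h x = 0 := by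
  simp only [pushoutInl_s2, comp_apply, QuotientAddGroup.mk'_apply, QuotientAddGroup.eq_zero_iff,
    mem_range, prod_apply, neg_apply, inl_apply, Prod.ext_iff, neg_eq_zero]

theorem mem_ker_sup_ker_of_pushoutInl_eq_zero (f : G →+ A) (h : G →+ B) {g : G}
    (hg : pushoutInl_s2 f h (f g) = 0) : g ∈ f.ker ⊔ h.ker := by
  obtain ⟨x, hfx, hhx⟩ := (pushoutInl_eq_zero_iff_s2 f h).mp hg
  rw [← sub_add_cancel g x]
  exact AddSubgroup.add_mem_sup (by simp [mem_ker, hfx]) (mem_ker.mpr hhx)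

end AddMonoidHom

theorem stmt2_general {G : Type} [AddCommGroup G] (g : G)
    (hyp : ∀ H K : AddSubgroup G, g ∉ H → g ∉ K → g ∉ H ⊔ K) :
    ∀ (K₀ L₀ : Type) (_ : AddCommGroup K₀) (_ : AddCommGroup L₀)
      (f : G →+ K₀) (h : G →+ L₀), f g ≠ 0 → h g ≠ 0 →
      ∃ (D : Type) (_ : AddCommGroup D) (d : D) (f' : K₀ →+ D) (h' : L₀ →+ D),
        d ≠ 0 ∧ f' (f g) = d ∧ h' (h g) = d ∧ f'.comp f = h'.comp h := by
  intro K₀ L₀ _ _ f h hf hh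
  refine ⟨f.Pushout_s2 h, inferInstance, f.pushoutInl_s2 h (f g), f.pushoutInl_s2 h, f.pushoutInr_s2 h,
    ?_, rfl, (DFunLike.congr_fun (f.pushoutInl_comp_eq_s2 h) g).symm, f.pushoutInl_comp_eq_s2 h⟩
  exact fun hd => hyp f.ker h.ker (mt f.mem_ker.mp hf) (mt h.mem_ker.mp hh)
    (f.mem_ker_sup_ker_of_pushoutInl_eq_zero h hd)

theorem stmt2 {G : Type} [AddCommGroup G] (g : G) (hg : g ≠ 0)
    (hyp : ∀ H K : AddSubgroup G, g ∉ H → g ∉ K → g ∉ H ⊔ K) :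
    ∀ (K₀ L₀ : Type) (_ : AddCommGroup K₀) (_ : AddCommGroup L₀)
      (f : G →+ K₀) (h : G →+ L₀), f g ≠ 0 → h g ≠ 0 →
      ∃ (D : Type) (_ : AddCommGroup D) (d : D) (f' : K₀ →+ D) (h' : L₀ →+ D),
        d ≠ 0 ∧ f' (f g) = d ∧ h' (h g) = d ∧ f'.comp f = h'.comp h :=
  stmt2_general g hyp
end

section
/- Let G be an abelian group and g ∈ G a nonzero element such that for all proper subgroups H, K of G, g ∈ H + K implies g ∈ H or g ∈ K. Then g has finite order, and the order of g is a power of a prime number. -/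
/-!
For coprime integers `a`, `b`, Bézout puts `g` in `⟨a • g⟩ + ⟨b • g⟩`, while `g ∈ ⟨a • g⟩`
forces `a` to be coprime to the order `n` of `g` (with `n = 0` for infinite order). So the
hypothesis says that of any two coprime integers one is coprime to `n`. Two distinct primes
dividing `n` would violate this, and every prime divides `0`; hence `n` is a prime power.
-/

open AddSubgroup

theorem mem_zmultiples_sup_zmultiples_of_isCoprime {G : Type*} [AddGroup G] (g : G) {a b : ℤ}
    (hab : IsCoprime a b) : g ∈ zmultiples (a • g) ⊔ zmultiples (b • g) := by
  obtain ⟨u, v, huv⟩ := hab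
  have hg : u • (a • g) + v • (b • g) = g := by
    rw [smul_smul, smul_smul, ← add_zsmul, huv, one_zsmul]
  simpa only [hg] using
    add_mem_sup (zsmul_mem_zmultiples (a • g) u) (zsmul_mem_zmultiples (b • g) v)

theorem isCoprime_addOrderOf_of_mem_zmultiples_zsmul {G : Type*} [AddGroup G] {g : G} {a : ℤ}
    (h : g ∈ zmultiples (a • g)) : IsCoprime a (addOrderOf g) := by
  obtain ⟨k, hk⟩ := mem_zmultiples_iff.mp h
  have hzero : (k * a - 1) • g = 0 := by rw [sub_zsmul, mul_zsmul, hk, one_zsmul, add_neg_cancel]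
  obtain ⟨m, hm⟩ := addOrderOf_dvd_iff_zsmul_eq_zero.mpr hzero
  exact ⟨k, -m, by linear_combination hm⟩

theorem isCoprime_addOrderOf_or_of_forall_mem_sup {G : Type*} [AddGroup G] {g : G}
    (hg : ∀ H K : AddSubgroup G, H ≠ ⊤ → K ≠ ⊤ → g ∈ H ⊔ K → g ∈ H ∨ g ∈ K)
    {a b : ℤ} (hab : IsCoprime a b) : IsCoprime a (addOrderOf g) ∨ IsCoprime b (addOrderOf g) := by
  by_contra! h
  have ha : g ∉ zmultiples (a • g) := mt isCoprime_addOrderOf_of_mem_zmultiples_zsmul h.1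
  have hb : g ∉ zmultiples (b • g) := mt isCoprime_addOrderOf_of_mem_zmultiples_zsmul h.2
  rcases hg _ _ (fun htop => ha (by simp [htop])) (fun htop => hb (by simp [htop]))
      (mem_zmultiples_sup_zmultiples_of_isCoprime g hab) with h | h
  exacts [ha h, hb h]

theorem Nat.isPrimePow_of_forall_isCoprime_or {n : ℕ} (hn : n ≠ 1)
    (h : ∀ a b : ℤ, IsCoprime a b → IsCoprime a n ∨ IsCoprime b n) : IsPrimePow n := by
  obtain ⟨p, hp, hpn⟩ := Nat.exists_prime_and_dvd hn
  refine isPrimePow_iff_unique_prime_dvd.mpr ⟨p, ⟨hp, hpn⟩, fun q ⟨hq, hqn⟩ => ?_⟩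
  by_contra hqp
  have hcop : IsCoprime (q : ℤ) p :=
    Nat.isCoprime_iff_coprime.mpr ((Nat.coprime_primes hq hp).mpr hqp)
  rcases h q p hcop with h | h
  · exact hq.ne_one ((Nat.isCoprime_iff_coprime.mp h).eq_one_of_dvd hqn)
  · exact hp.ne_one ((Nat.isCoprime_iff_coprime.mp h).eq_one_of_dvd hpn)

theorem stmt4 {G : Type} [AddCommGroup G] (g : G) (hg : g ≠ 0)
    (hbase : ∀ H K : AddSubgroup G, H ≠ ⊤ → K ≠ ⊤ → g ∈ H ⊔ K → g ∈ H ∨ g ∈ K) :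
    0 < addOrderOf g ∧ IsPrimePow (addOrderOf g) := by
  have hn : addOrderOf g ≠ 1 := mt AddMonoid.addOrderOf_eq_one_iff.mp hg
  have hpow : IsPrimePow (addOrderOf g) := Nat.isPrimePow_of_forall_isCoprime_or hn
    fun _ _ hab => isCoprime_addOrderOf_or_of_forall_mem_sup hbase hab
  exact ⟨hpow.pos, hpow⟩
end

section
/- Let G be an abelian group and g ∈ G a nonzero element of order p^n (p prime, n ≥ 1). Suppose G contains two distinct subgroups of order p. Then there exist proper subgroups H, K of G with g ∈ H + K, g ∉ H, and g ∉ K. -/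
/-!
One of the two subgroups of order `p`, call it `C`, is not contained in `⟨g⟩`: a finite cyclic
group has at most one subgroup of each order. Having prime order, `C` then meets `⟨g⟩` trivially.
For `a ∈ C \ ⟨g⟩` take `H = ⟨g + a⟩` and `K = C`. Clearly `g = (g + a) - a ∈ H + K` and `g ∉ C`.
If `g = m (g + a)` then `(1 - m) g = m a ∈ ⟨g⟩ ∩ C = 0`, so `p ∣ m` and `p ∣ p ^ n ∣ 1 - m`,
which is absurd.
-/

namespace AddSubgroup

variable {G : Type*}

theorem disjoint_of_card_prime_of_not_le [AddGroup G] {p : ℕ} [Fact p.Prime] {C K : AddSubgroup G}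
    (hC : Nat.card C = p) (hCK : ¬C ≤ K) : Disjoint K C := by
  subst hC
  rcases (K.addSubgroupOf C).eq_bot_or_eq_top_of_prime_card with h | h
  · exact addSubgroupOf_eq_bot.mp h
  · exact absurd (addSubgroupOf_eq_top.mp h) hCK

variable [AddCommGroup G]

theorem eq_zmultiples_nsmul_of_le_zmultiples {g : G} (hg : IsOfFinAddOrder g) {C : AddSubgroup G}
    (hC : C ≤ zmultiples g) : C = zmultiples ((addOrderOf g / Nat.card C) • g) := by
  obtain ⟨e, he⟩ : Nat.card C ∣ addOrderOf g := Nat.card_zmultiples g ▸ card_dvd_of_le hC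
  have hd : 0 < Nat.card C := Nat.pos_of_mul_pos_right (he ▸ hg.addOrderOf_pos)
  have he0 : e ≠ 0 := by rintro rfl; exact hg.addOrderOf_pos.ne' (by simpa using he)
  have hcard : Nat.card (zmultiples (e • g)) = Nat.card C := by
    rw [Nat.card_zmultiples, addOrderOf_nsmul_of_dvd he0 (he ▸ dvd_mul_left e _), he,
      Nat.mul_div_cancel _ (Nat.pos_of_ne_zero he0)]
  have : Finite (zmultiples (e • g)) := Nat.finite_of_card_ne_zero (hcard ▸ hd.ne')
  rw [he, Nat.mul_div_cancel_left _ hd]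
  refine eq_of_le_of_card_ge (fun c hc => ?_) hcard.le
  obtain ⟨k, rfl⟩ := mem_zmultiples_iff.mp (hC hc)
  have hkill : (Nat.card C * k : ℤ) • g = 0 := by
    rw [mul_smul, natCast_zsmul]
    exact addOrderOf_dvd_iff_nsmul_eq_zero.mp (C.addOrderOf_dvd_natCard hc)
  obtain ⟨j, hj⟩ : (e : ℤ) ∣ k := by
    have := addOrderOf_dvd_iff_zsmul_eq_zero.mpr hkill
    rw [he, Nat.cast_mul] at this
    exact (mul_dvd_mul_iff_left (by exact_mod_cast hd.ne')).mp this
  exact mem_zmultiples_iff.mpr ⟨j, by rw [hj, mul_comm, mul_smul, natCast_zsmul]⟩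

theorem eq_of_le_zmultiples_of_card_eq {g : G} (hg : IsOfFinAddOrder g) {C D : AddSubgroup G}
    (hC : C ≤ zmultiples g) (hD : D ≤ zmultiples g) (hCD : Nat.card C = Nat.card D) : C = D := by
  rw [eq_zmultiples_nsmul_of_le_zmultiples hg hC, eq_zmultiples_nsmul_of_le_zmultiples hg hD, hCD]

theorem notMem_zmultiples_add {g a : G} {K : AddSubgroup G} (hgK : Disjoint (zmultiples g) K)
    (ha : a ∈ K) (hga : ¬(addOrderOf g).Coprime (addOrderOf a)) : g ∉ zmultiples (g + a) := by
  intro hg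
  obtain ⟨m, hm⟩ := mem_zmultiples_iff.mp hg
  have hsplit : (1 - m) • g = m • a := by linear_combination (norm := module) -hm
  have ha0 : m • a = 0 :=
    disjoint_def.mp hgK (hsplit ▸ zsmul_mem (mem_zmultiples g) _) (zsmul_mem ha m)
  obtain ⟨s, hs⟩ := addOrderOf_dvd_iff_zsmul_eq_zero.mpr (hsplit.trans ha0)
  obtain ⟨t, ht⟩ := addOrderOf_dvd_iff_zsmul_eq_zero.mpr ha0
  exact hga (Nat.isCoprime_iff_coprime.mp ⟨s, t, by linear_combination -hs - ht⟩)

end AddSubgroup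

open AddSubgroup

theorem stmt16_general {G : Type} [AddCommGroup G] (g : G) (hg : g ≠ 0)
    (p : ℕ) (hp : p.Prime) (n : ℕ) (hord : addOrderOf g = p ^ n)
    (A B : AddSubgroup G) (hAB : A ≠ B)
    (hA : Nat.card A = p) (hB : Nat.card B = p) :
    ∃ H K : AddSubgroup G, H ≠ ⊤ ∧ K ≠ ⊤ ∧ g ∈ H ⊔ K ∧ g ∉ H ∧ g ∉ K := by
  have : Fact p.Prime := ⟨hp⟩
  have hfin : IsOfFinAddOrder g := addOrderOf_pos_iff.mp (hord ▸ pow_pos hp.pos n)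
  obtain ⟨C, hC, hCg⟩ : ∃ C : AddSubgroup G, Nat.card C = p ∧ ¬C ≤ zmultiples g := by
    by_contra! h
    exact hAB (eq_of_le_zmultiples_of_card_eq hfin (h A hA) (h B hB) (hA.trans hB.symm))
  have hdisj : Disjoint (zmultiples g) C := disjoint_of_card_prime_of_not_le hC hCg
  obtain ⟨a, haC, hag⟩ := SetLike.not_le_iff_exists.mp hCg
  have ha : addOrderOf a = p :=
    addOrderOf_eq_prime (addOrderOf_dvd_iff_nsmul_eq_zero.mp (hC ▸ C.addOrderOf_dvd_natCard haC))
      (by rintro rfl; exact hag (zero_mem _))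
  have hn : n ≠ 0 := by
    rintro rfl
    exact hg (AddMonoid.addOrderOf_eq_one_iff.mp (by rw [hord, pow_zero]))
  have hgH : g ∉ zmultiples (g + a) := notMem_zmultiples_add hdisj haC <| by
    rw [ha, hord, Nat.coprime_comm, hp.coprime_iff_not_dvd, not_not]
    exact dvd_pow_self p hn
  have hgC : g ∉ C := fun h => hg (disjoint_def.mp hdisj (mem_zmultiples g) h)
  refine ⟨zmultiples (g + a), C, fun h => hgH (h ▸ mem_top g), fun h => hgC (h ▸ mem_top g),
    ?_, hgH, hgC⟩
  simpa using sub_mem (mem_sup_left (mem_zmultiples (g + a))) (mem_sup_right haC)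

theorem stmt16 {G : Type} [AddCommGroup G] (g : G) (hg : g ≠ 0)
    (p : ℕ) (hp : p.Prime) (n : ℕ) (hn : 1 ≤ n) (hord : addOrderOf g = p ^ n)
    (A B : AddSubgroup G) (hAB : A ≠ B)
    (hA : Nat.card A = p) (hB : Nat.card B = p) :
    ∃ H K : AddSubgroup G, H ≠ ⊤ ∧ K ≠ ⊤ ∧ g ∈ H ⊔ K ∧ g ∉ H ∧ g ∉ K :=
  stmt16_general g hg p hp n hord A B hAB hA hB
end

section
/- Let G be an abelian group, g ∈ G of order p^n, and L, K subgroups of G with g ∈ L + K. Define L_g = {l ∈ L : ∃ k ∈ K, l + k ∈ ⟨g⟩} and K_g = {k ∈ K : ∃ l ∈ L, l + k ∈ ⟨g⟩}. Then L_g and K_g are subgroups of G, ⟨g⟩ ⊆ L_g + K_g, and the quotients L_g/(L_g ∩ K_g) and K_g/(L_g ∩ K_g) are cyclic p-groups (every element has order dividing p^n). -/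
theorem stmt17 {G : Type} [AddCommGroup G] (g : G) (p : ℕ) (hp : p.Prime)
    (n : ℕ) (hord : addOrderOf g = p ^ n)
    (L K : AddSubgroup G) (hg : g ∈ L ⊔ K) :
    ∃ Lg Kg : AddSubgroup G,
      (∀ x : G, x ∈ Lg ↔ x ∈ L ∧ ∃ k ∈ K, x + k ∈ AddSubgroup.zmultiples g) ∧
      (∀ x : G, x ∈ Kg ↔ x ∈ K ∧ ∃ l ∈ L, l + x ∈ AddSubgroup.zmultiples g) ∧
      AddSubgroup.zmultiples g ≤ Lg ⊔ Kg ∧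
      IsAddCyclic (↥Lg ⧸ (Lg ⊓ Kg).addSubgroupOf Lg) ∧
      IsAddCyclic (↥Kg ⧸ (Lg ⊓ Kg).addSubgroupOf Kg) ∧
      (∀ x : ↥Lg ⧸ (Lg ⊓ Kg).addSubgroupOf Lg, p ^ n • x = 0) ∧
      (∀ x : ↥Kg ⧸ (Lg ⊓ Kg).addSubgroupOf Kg, p ^ n • x = 0) := by
  obtain ⟨l, hlL, k, hkK, hlk⟩ := AddSubgroup.mem_sup.mp hg
  set Z := AddSubgroup.zmultiples g with hZdef
  set Lg := L ⊓ (Z ⊔ K) with hLgdef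
  set Kg := K ⊓ (Z ⊔ L) with hKgdef
  have hgZ : g ∈ Z := AddSubgroup.mem_zmultiples g
  have hkeq : k = g - l := by rw [← hlk]; abel
  have hleq : l = g - k := by rw [← hlk]; abel
  have hlLg : l ∈ Lg :=
    ⟨hlL, AddSubgroup.mem_sup.mpr ⟨g, hgZ, -k, neg_mem hkK, by rw [hleq]; abel⟩⟩
  have hkKg : k ∈ Kg :=
    ⟨hkK, AddSubgroup.mem_sup.mpr ⟨g, hgZ, -l, neg_mem hlL, by rw [hkeq]; abel⟩⟩
  have hN : (p ^ n) • g = 0 := by rw [← hord]; exact addOrderOf_nsmul_eq_zero g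
  -- p^n • l ∈ Kg and p^n • k ∈ Lg
  have hsum : (p ^ n) • l + (p ^ n) • k = 0 := by rw [← smul_add, hlk, hN]
  have hpnl : (p ^ n) • l ∈ Kg := by
    have h1 : (p ^ n) • l = -((p ^ n) • k) := eq_neg_of_add_eq_zero_left hsum
    refine AddSubgroup.mem_inf.mpr ⟨?_, AddSubgroup.mem_sup_right (nsmul_mem hlL _)⟩
    rw [h1]; exact neg_mem (nsmul_mem hkK _)
  have hpnk : (p ^ n) • k ∈ Lg := by
    have h1 : (p ^ n) • k = -((p ^ n) • l) := eq_neg_of_add_eq_zero_right hsum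
    refine AddSubgroup.mem_inf.mpr ⟨?_, AddSubgroup.mem_sup_right (nsmul_mem hkK _)⟩
    rw [h1]; exact neg_mem (nsmul_mem hlL _)
  have decompL : ∀ y : G, y ∈ Lg → ∃ m : ℤ, y - m • l ∈ Lg ⊓ Kg := by
    rintro y ⟨hyL, hy2⟩
    obtain ⟨a, ha, b, hb, hab⟩ := AddSubgroup.mem_sup.mp hy2
    obtain ⟨m, hm⟩ := AddSubgroup.mem_zmultiples_iff.mp ha
    have key : y - m • l = m • k + b := by
      rw [hkeq, smul_sub, ← hab, ← hm]; abel
    have hyLg : y ∈ Lg := ⟨hyL, hy2⟩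
    refine ⟨m, AddSubgroup.mem_inf.mpr ⟨sub_mem hyLg (zsmul_mem hlLg m),
      AddSubgroup.mem_inf.mpr ⟨?_, ?_⟩⟩⟩
    · rw [key]; exact add_mem (zsmul_mem hkK m) hb
    · exact AddSubgroup.mem_sup_right (sub_mem hyL (zsmul_mem hlL m))
  have decompK : ∀ y : G, y ∈ Kg → ∃ m : ℤ, y - m • k ∈ Lg ⊓ Kg := by
    rintro y ⟨hyK, hy2⟩
    obtain ⟨a, ha, b, hb, hab⟩ := AddSubgroup.mem_sup.mp hy2
    obtain ⟨m, hm⟩ := AddSubgroup.mem_zmultiples_iff.mp ha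
    have key : y - m • k = m • l + b := by
      rw [hleq, smul_sub, ← hab, ← hm]; abel
    have hbLg : b ∈ Lg := ⟨hb,
      AddSubgroup.mem_sup.mpr ⟨-a, neg_mem ha, y, hyK, by rw [← hab]; abel⟩⟩
    have hyKg : y ∈ Kg := ⟨hyK, hy2⟩
    refine ⟨m, AddSubgroup.mem_inf.mpr ⟨?_, sub_mem hyKg (zsmul_mem hkKg m)⟩⟩
    rw [key]; exact add_mem (zsmul_mem hlLg m) hbLg
  refine ⟨Lg, Kg, ?_, ?_, ?_, ?_, ?_, ?_, ?_⟩
  · intro x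
    constructor
    · rintro ⟨hx, hx2⟩
      obtain ⟨a, ha, b, hb, hab⟩ := AddSubgroup.mem_sup.mp hx2
      exact ⟨hx, -b, neg_mem hb, by rw [← hab, add_neg_cancel_right]; exact ha⟩
    · rintro ⟨hx, c, hc, hxc⟩
      exact ⟨hx, AddSubgroup.mem_sup.mpr ⟨x + c, hxc, -c, neg_mem hc, by abel⟩⟩
  · intro x
    constructor
    · rintro ⟨hx, hx2⟩
      obtain ⟨a, ha, b, hb, hab⟩ := AddSubgroup.mem_sup.mp hx2
      refine ⟨hx, -b, neg_mem hb, ?_⟩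
      have : -b + x = a := by rw [← hab]; abel
      rw [this]; exact ha
    · rintro ⟨hx, c, hc, hxc⟩
      exact ⟨hx, AddSubgroup.mem_sup.mpr ⟨c + x, hxc, -c, neg_mem hc, by abel⟩⟩
  · rw [hZdef]
    refine AddSubgroup.zmultiples_le.mpr ?_
    rw [← hlk]
    exact add_mem (AddSubgroup.mem_sup_left hlLg) (AddSubgroup.mem_sup_right hkKg)
  · refine ⟨QuotientAddGroup.mk ⟨l, hlLg⟩, ?_⟩
    intro x
    refine QuotientAddGroup.induction_on x ?_
    intro z
    obtain ⟨m, hm⟩ := decompL z z.2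
    refine AddSubgroup.mem_zmultiples_iff.mpr ⟨m, ?_⟩
    rw [← QuotientAddGroup.mk_zsmul, QuotientAddGroup.eq, AddSubgroup.mem_addSubgroupOf]
    have hco : ((-(m • (⟨l, hlLg⟩ : ↥Lg)) + z : ↥Lg) : G) = (z : G) - m • l := by
      push_cast; abel
    rw [hco]
    exact hm
  · refine ⟨QuotientAddGroup.mk ⟨k, hkKg⟩, ?_⟩
    intro x
    refine QuotientAddGroup.induction_on x ?_
    intro z
    obtain ⟨m, hm⟩ := decompK z z.2
    refine AddSubgroup.mem_zmultiples_iff.mpr ⟨m, ?_⟩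
    rw [← QuotientAddGroup.mk_zsmul, QuotientAddGroup.eq, AddSubgroup.mem_addSubgroupOf]
    have hco : ((-(m • (⟨k, hkKg⟩ : ↥Kg)) + z : ↥Kg) : G) = (z : G) - m • k := by
      push_cast; abel
    rw [hco]
    exact hm
  · intro x
    refine QuotientAddGroup.induction_on x ?_
    intro z
    obtain ⟨m, hm⟩ := decompL z z.2
    rw [← QuotientAddGroup.mk_nsmul, QuotientAddGroup.eq_zero_iff,
      AddSubgroup.mem_addSubgroupOf]
    have hco : (((p ^ n) • z : ↥Lg) : G) = (p ^ n) • (z : G) := by push_cast; ring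
    rw [hco]
    have key : (p ^ n) • (z : G) = (p ^ n) • ((z : G) - m • l) + m • ((p ^ n) • l) := by
      module
    refine AddSubgroup.mem_inf.mpr ⟨nsmul_mem z.2 _, ?_⟩
    rw [key]
    exact add_mem (nsmul_mem (AddSubgroup.mem_inf.mp hm).2 _) (zsmul_mem hpnl m)
  · intro x
    refine QuotientAddGroup.induction_on x ?_
    intro z
    obtain ⟨m, hm⟩ := decompK z z.2
    rw [← QuotientAddGroup.mk_nsmul, QuotientAddGroup.eq_zero_iff,
      AddSubgroup.mem_addSubgroupOf]
    have hco : (((p ^ n) • z : ↥Kg) : G) = (p ^ n) • (z : G) := by push_cast; ring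
    rw [hco]
    have key : (p ^ n) • (z : G) = (p ^ n) • ((z : G) - m • k) + m • ((p ^ n) • k) := by
      module
    refine AddSubgroup.mem_inf.mpr ⟨?_, nsmul_mem z.2 _⟩
    rw [key]
    exact add_mem (nsmul_mem (AddSubgroup.mem_inf.mp hm).1 _) (zsmul_mem hpnk m)
end
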